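/- For every n ∈ ℤ and every integer k ≥ 0, the following operator identity holds on K: (1 − q)·t·𝓜_{n+2k+1,n} = Σ_{ℓ=0}^{k} ( 𝓜_{n+2ℓ} ∘ 𝓜_{n+2k−2ℓ+1} − q·𝓜_{n+2k−2ℓ+1} ∘ 𝓜_{n+2ℓ} ), i.e. (1−q)·t·𝓜_{n+2k+1,n} = Σ_{ℓ=0}^k [𝓜_{n+2ℓ}, 𝓜_{n+2k−2ℓ+1}]_q where [X,Y]_q = X∘Y − q·Y∘X. -/

import Mathlib

open scoped BigOperators

noncomputable section

/-- The field `F(x₁,…,x_N)` of rational functions in `N` variables over `F`. -/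
abbrev RatF (F : Type) [Field F] (N : ℕ) : Type :=
  FractionRing (MvPolynomial (Fin N) F)

/-- The variable `xᵢ` viewed inside the rational function field. -/
noncomputable def Xv (F : Type) [Field F] (N : ℕ) (i : Fin N) : RatF F N :=
  algebraMap (MvPolynomial (Fin N) F) (RatF F N) (MvPolynomial.X i)

/-- The generalized Macdonald operator `𝓜ₙ`:
`𝓜ₙ f = Σᵢ xᵢⁿ · (Πⱼ≠ᵢ (t·xᵢ − xⱼ)/(xᵢ − xⱼ)) · Γᵢ(f)`. -/
noncomputable def Mac (F : Type) [Field F] (N : ℕ) (t : F)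
    (Γ : Fin N → (RatF F N ≃ₐ[F] RatF F N)) (n : ℤ) (f : RatF F N) : RatF F N :=
  ∑ i : Fin N, Xv F N i ^ n *
    (∏ j ∈ Finset.univ.erase i, (t • Xv F N i - Xv F N j) / (Xv F N i - Xv F N j)) *
    Γ i f

/-- The operator `𝓜_{a,b}` built from the generalized Schur function
`s_{a,b}(x,y) = (x^{a+1}y^b − y^{a+1}x^b)/(x−y)`:
`𝓜_{a,b} f = Σ_{i<j} s_{a,b}(xᵢ,xⱼ) · Π_{k∉{i,j}} ((t xᵢ−xₖ)(t xⱼ−xₖ))/((xᵢ−xₖ)(xⱼ−xₖ)) · ΓᵢΓⱼ f`. -/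
noncomputable def MacPair (F : Type) [Field F] (N : ℕ) (t : F)
    (Γ : Fin N → (RatF F N ≃ₐ[F] RatF F N)) (a b : ℤ) (f : RatF F N) : RatF F N :=
  ∑ i : Fin N, ∑ j ∈ Finset.univ.filter (fun j : Fin N => i < j),
    ((Xv F N i ^ (a + 1) * Xv F N j ^ b - Xv F N j ^ (a + 1) * Xv F N i ^ b) /
        (Xv F N i - Xv F N j)) *
      (∏ k ∈ (Finset.univ.erase i).erase j,
        ((t • Xv F N i - Xv F N k) * (t • Xv F N j - Xv F N k)) /
          ((Xv F N i - Xv F N k) * (Xv F N j - Xv F N k))) *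
      Γ i (Γ j f)

/-!
Expanding the composition, `𝓜_a (𝓜_b f) = Σ_{i,j} Aᵢ(a) Γᵢ(Aⱼ(b)) ΓᵢΓⱼ f` with
`Aᵢ(m) = xᵢ^m Π_{j≠i} (t xᵢ − xⱼ)/(xᵢ − xⱼ)`. On the diagonal the coefficient of
`Σ_ℓ [𝓜_{n+2ℓ}, 𝓜_{n+2k−2ℓ+1}]_q` is `Σ_ℓ (q^{n+2k−2ℓ+1} − q^{n+2ℓ+1})` times a fixed
function, and this vanishes under the reflection `ℓ ↦ k − ℓ`. Off the diagonal the shifts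
`Γᵢ`, `Γⱼ` commute, so the `(i,j)` and `(j,i)` terms combine; after removing the common factor
`Π_{l∉{i,j}}` and summing `Σ_ℓ x^{2ℓ} y^{2(k−ℓ)} = (x^{2k+2} − y^{2k+2})/(x² − y²)`, what remains is
`(tx − y)(ty − qx) − (ty − x)(tx − qy) = (1 − q) t (x² − y²)`.
-/

open Finset

section Field

variable {K : Type*} [Field K]

theorem zpow_add_two_mul_natCast {x : K} (hx : x ≠ 0) (n : ℤ) (c : ℕ) :
    x ^ (n + 2 * (c : ℤ)) = x ^ n * (x ^ 2) ^ c := by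
  rw [zpow_add₀ hx, ← pow_mul, ← zpow_natCast, Nat.cast_mul, Nat.cast_ofNat]

theorem sum_zpow_mul_zpow_eq_mul_geom_sum₂ {x y : K} (hx : x ≠ 0) (hy : y ≠ 0) (n : ℤ) (k : ℕ) :
    ∑ l ∈ range (k + 1), x ^ (n + 2 * (l : ℤ)) * y ^ (n + 2 * (k : ℤ) - 2 * l + 1)
      = x ^ n * y ^ (n + 1) * ∑ l ∈ range (k + 1), (x ^ 2) ^ l * (y ^ 2) ^ (k + 1 - 1 - l) := by
  rw [mul_sum]
  refine sum_congr rfl fun l hl => ?_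
  have hlk : l ≤ k := Nat.lt_succ_iff.mp (mem_range.mp hl)
  have hexp : n + 2 * (k : ℤ) - 2 * l + 1 = n + 1 + 2 * ((k + 1 - 1 - l : ℕ) : ℤ) := by
    push_cast [Nat.add_sub_cancel, Nat.cast_sub hlk]
    ring
  rw [hexp, zpow_add_two_mul_natCast hx, zpow_add_two_mul_natCast hy]
  ring

theorem sum_qComm_two_point {x y T Q : K} (hx : x ≠ 0) (hy : y ≠ 0) (hxy : x - y ≠ 0)
    (hyQx : y - Q * x ≠ 0) (hxQy : x - Q * y ≠ 0) (n : ℤ) (k : ℕ) :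
    ∑ l ∈ range (k + 1),
      ((x ^ (n + 2 * (l : ℤ)) * y ^ (n + 2 * (k : ℤ) - 2 * l + 1)
          - Q * (y ^ (n + 2 * (l : ℤ)) * x ^ (n + 2 * (k : ℤ) - 2 * l + 1)))
        * ((T * x - y) / (x - y) * ((T * y - Q * x) / (y - Q * x)))
      + (y ^ (n + 2 * (l : ℤ)) * x ^ (n + 2 * (k : ℤ) - 2 * l + 1)
          - Q * (x ^ (n + 2 * (l : ℤ)) * y ^ (n + 2 * (k : ℤ) - 2 * l + 1)))
        * ((T * y - x) / (y - x) * ((T * x - Q * y) / (x - Q * y))))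
    = (1 - Q) * T * ((x ^ (n + 2 * (k : ℤ) + 1 + 1) * y ^ n
        - y ^ (n + 2 * (k : ℤ) + 1 + 1) * x ^ n) / (x - y)) := by
  have hyx : y - x ≠ 0 := by rwa [← neg_sub, neg_ne_zero]
  have hS := geom_sum₂_mul (x ^ 2) (y ^ 2) (k + 1)
  rw [geom_sum₂_comm (x ^ 2)] at hS
  rw [sum_add_distrib, ← sum_mul, ← sum_mul, sum_sub_distrib, sum_sub_distrib, ← mul_sum,
    ← mul_sum, sum_zpow_mul_zpow_eq_mul_geom_sum₂ hx hy, sum_zpow_mul_zpow_eq_mul_geom_sum₂ hy hx,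
    geom_sum₂_comm (x ^ 2)]
  set S := ∑ l ∈ range (k + 1), (y ^ 2) ^ l * (x ^ 2) ^ (k + 1 - 1 - l)
  have hxk : x ^ (n + 2 * (k : ℤ) + 1 + 1) = x ^ n * (x ^ 2) ^ (k + 1) := by
    rw [← zpow_add_two_mul_natCast hx]; push_cast; ring_nf
  have hyk : y ^ (n + 2 * (k : ℤ) + 1 + 1) = y ^ n * (y ^ 2) ^ (k + 1) := by
    rw [← zpow_add_two_mul_natCast hy]; push_cast; ring_nf
  rw [hxk, hyk, zpow_add_one₀ hx, zpow_add_one₀ hy]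
  rw [show x ^ n * (x ^ 2) ^ (k + 1) * y ^ n - y ^ n * (y ^ 2) ^ (k + 1) * x ^ n
      = x ^ n * y ^ n * ((x ^ 2) ^ (k + 1) - (y ^ 2) ^ (k + 1)) by ring, ← hS]
  have hyxQ : y - x * Q ≠ 0 := by rwa [mul_comm]
  have hxyQ : x - y * Q ≠ 0 := by rwa [mul_comm]
  field_simp
  ring

theorem sum_range_zpow_reflect_sub_eq_zero (Q : K) (n : ℤ) (k : ℕ) :
    ∑ l ∈ range (k + 1), (Q ^ (n + 2 * (k : ℤ) - 2 * l + 1) - Q ^ (n + 2 * (l : ℤ) + 1)) = 0 := by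
  rw [sum_sub_distrib, sub_eq_zero, ← sum_range_reflect]
  refine sum_congr rfl fun l hl => ?_
  have hlk : l ≤ k := Nat.lt_succ_iff.mp (mem_range.mp hl)
  push_cast [Nat.add_sub_cancel, Nat.cast_sub hlk]
  ring_nf

end Field

theorem sum_sum_eq_sum_sum_lt_add_swap {ι M : Type*} [Fintype ι] [LinearOrder ι] [AddCommMonoid M]
    (H : ι → ι → M) (hH : ∀ i, H i i = 0) :
    ∑ i, ∑ j, H i j = ∑ i, ∑ j ∈ univ.filter (i < ·), (H i j + H j i) := by
  have hsplit : ∀ i, ∑ j, H i j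
      = ∑ j ∈ univ.filter (i < ·), H i j + ∑ j ∈ univ.filter (· < i), H i j := by
    intro i
    rw [← sum_filter_add_sum_filter_not univ (i < ·)]
    congr 1
    refine (sum_subset (fun j => by simpa using le_of_lt) fun j hj hji => ?_).symm
    simp only [mem_filter, mem_univ, true_and, not_lt] at hj hji
    rw [le_antisymm hj hji, hH]
  simp only [hsplit, sum_add_distrib]
  congr 1
  exact sum_comm' fun _ _ => by simp [and_comm]

section Macdonald

variable {F : Type} [Field F] {N : ℕ}

theorem Xv_ne_zero (i : Fin N) : Xv F N i ≠ 0 :=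
  (map_ne_zero_iff _ (IsFractionRing.injective _ _)).mpr (MvPolynomial.X_ne_zero i)

theorem Xv_sub_algebraMap_mul_Xv_ne_zero {i j : Fin N} (hij : i ≠ j) (c : F) :
    Xv F N i - algebraMap F (RatF F N) c * Xv F N j ≠ 0 := by
  have hpoly : Xv F N i - algebraMap F (RatF F N) c * Xv F N j
      = algebraMap (MvPolynomial (Fin N) F) (RatF F N)
          (MvPolynomial.X i - MvPolynomial.C c * MvPolynomial.X j) := by
    rw [map_sub, map_mul, Xv, Xv,
      IsScalarTower.algebraMap_apply F (MvPolynomial (Fin N) F) (RatF F N),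
      MvPolynomial.algebraMap_eq]
  rw [hpoly, map_ne_zero_iff _ (IsFractionRing.injective _ _)]
  intro h
  simpa [hij.symm] using congrArg (MvPolynomial.eval (Pi.single i 1)) h

theorem Xv_sub_Xv_ne_zero {i j : Fin N} (hij : i ≠ j) : Xv F N i - Xv F N j ≠ 0 := by
  simpa using Xv_sub_algebraMap_mul_Xv_ne_zero hij (1 : F)

theorem RatF.algHom_ext {B : Type*} [Semiring B] [Algebra F B] {φ ψ : RatF F N →ₐ[F] B}
    (h : ∀ i, φ (Xv F N i) = ψ (Xv F N i)) : φ = ψ :=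
  IsLocalization.algHom_ext (nonZeroDivisors _) (MvPolynomial.algHom_ext h)

def IsQShift (q : F) (Γ : Fin N → (RatF F N ≃ₐ[F] RatF F N)) : Prop :=
  ∀ i j : Fin N, Γ i (Xv F N j) = if j = i then q • Xv F N j else Xv F N j

namespace IsQShift

variable {q : F} {Γ : Fin N → (RatF F N ≃ₐ[F] RatF F N)}

theorem apply_self (hΓ : IsQShift q Γ) (i : Fin N) : Γ i (Xv F N i) = q • Xv F N i := by
  rw [hΓ, if_pos rfl]

theorem apply_of_ne (hΓ : IsQShift q Γ) {i j : Fin N} (hji : j ≠ i) :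
    Γ i (Xv F N j) = Xv F N j := by
  rw [hΓ, if_neg hji]

theorem comm (hΓ : IsQShift q Γ) (i j : Fin N) (f : RatF F N) : Γ i (Γ j f) = Γ j (Γ i f) := by
  obtain rfl | hij := eq_or_ne i j
  · rfl
  suffices h : (Γ i).toAlgHom.comp (Γ j).toAlgHom = (Γ j).toAlgHom.comp (Γ i).toAlgHom from
    AlgHom.congr_fun h f
  refine RatF.algHom_ext fun l => ?_
  change Γ i (Γ j (Xv F N l)) = Γ j (Γ i (Xv F N l))
  obtain rfl | hli := eq_or_ne l i
  · rw [hΓ.apply_of_ne hij, hΓ.apply_self, map_smul, hΓ.apply_of_ne hij]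
  obtain rfl | hlj := eq_or_ne l j
  · rw [hΓ.apply_self, map_smul, hΓ.apply_of_ne hli, hΓ.apply_self]
  · rw [hΓ.apply_of_ne hlj, hΓ.apply_of_ne hli, hΓ.apply_of_ne hlj]

end IsQShift

def macCoeff (t : F) (m : ℤ) (i : Fin N) : RatF F N :=
  Xv F N i ^ m * ∏ j ∈ univ.erase i, (t • Xv F N i - Xv F N j) / (Xv F N i - Xv F N j)

theorem macCoeff_eq_zpow_mul (t : F) (m : ℤ) (i : Fin N) :
    macCoeff t m i = Xv F N i ^ m * macCoeff t 0 i := by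
  rw [macCoeff, macCoeff, zpow_zero, one_mul]

theorem macCoeff_eq_of_ne (t : F) (m : ℤ) {i j : Fin N} (hij : i ≠ j) :
    macCoeff t m i = Xv F N i ^ m * ((t • Xv F N i - Xv F N j) / (Xv F N i - Xv F N j)) *
      ∏ l ∈ (univ.erase i).erase j, (t • Xv F N i - Xv F N l) / (Xv F N i - Xv F N l) := by
  rw [macCoeff, ← mul_prod_erase _ _ (mem_erase.mpr ⟨hij.symm, mem_univ j⟩), mul_assoc]

variable {q t : F} {Γ : Fin N → (RatF F N ≃ₐ[F] RatF F N)}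

theorem IsQShift.apply_macCoeff_self (hΓ : IsQShift q Γ) (m : ℤ) (i : Fin N) :
    Γ i (macCoeff t m i) = q ^ m • (Xv F N i ^ m * Γ i (macCoeff t 0 i)) := by
  rw [macCoeff_eq_zpow_mul, map_mul, map_zpow₀, hΓ.apply_self, Algebra.smul_def, mul_zpow,
    ← map_zpow₀, mul_assoc, ← Algebra.smul_def]

theorem IsQShift.apply_macCoeff_of_ne (hΓ : IsQShift q Γ) (m : ℤ) {i j : Fin N} (hij : i ≠ j) :
    Γ i (macCoeff t m j)
      = Xv F N j ^ m * ((t • Xv F N j - q • Xv F N i) / (Xv F N j - q • Xv F N i)) *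
        ∏ l ∈ (univ.erase j).erase i, (t • Xv F N j - Xv F N l) / (Xv F N j - Xv F N l) := by
  rw [macCoeff_eq_of_ne t m hij.symm, map_mul, map_mul, map_zpow₀, map_prod, map_div₀, map_sub,
    map_sub, map_smul, hΓ.apply_self, hΓ.apply_of_ne hij.symm]
  refine congrArg _ (prod_congr rfl fun l hl => ?_)
  rw [map_div₀, map_sub, map_sub, map_smul, hΓ.apply_of_ne hij.symm,
    hΓ.apply_of_ne (ne_of_mem_erase hl)]

theorem Mac_eq_sum (t : F) (Γ : Fin N → (RatF F N ≃ₐ[F] RatF F N)) (m : ℤ) (f : RatF F N) :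
    Mac F N t Γ m f = ∑ i, macCoeff t m i * Γ i f :=
  rfl

def macCompCoeff (t : F) (Γ : Fin N → (RatF F N ≃ₐ[F] RatF F N)) (a b : ℤ) (i j : Fin N) :
    RatF F N :=
  macCoeff t a i * Γ i (macCoeff t b j)

theorem Mac_Mac_eq_sum (a b : ℤ) (f : RatF F N) :
    Mac F N t Γ a (Mac F N t Γ b f) = ∑ i, ∑ j, macCompCoeff t Γ a b i j * Γ i (Γ j f) := by
  simp only [Mac_eq_sum, map_sum, map_mul, mul_sum, macCompCoeff, mul_assoc]

theorem IsQShift.macCompCoeff_self (hΓ : IsQShift q Γ) (a b : ℤ) (i : Fin N) :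
    macCompCoeff t Γ a b i i
      = q ^ b • (Xv F N i ^ (a + b) * (macCoeff t 0 i * Γ i (macCoeff t 0 i))) := by
  rw [macCompCoeff, hΓ.apply_macCoeff_self, macCoeff_eq_zpow_mul, zpow_add₀ (Xv_ne_zero i),
    mul_smul_comm]
  ring_nf

def macQCommCoeff (t q : F) (Γ : Fin N → (RatF F N ≃ₐ[F] RatF F N)) (n : ℤ) (k : ℕ)
    (i j : Fin N) : RatF F N :=
  ∑ l ∈ range (k + 1), (macCompCoeff t Γ (n + 2 * l) (n + 2 * k - 2 * l + 1) i j
    - q • macCompCoeff t Γ (n + 2 * k - 2 * l + 1) (n + 2 * l) i j)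

theorem sum_qComm_Mac_eq_sum (n : ℤ) (k : ℕ) (f : RatF F N) :
    ∑ l ∈ range (k + 1), (Mac F N t Γ (n + 2 * l) (Mac F N t Γ (n + 2 * k - 2 * l + 1) f)
        - q • Mac F N t Γ (n + 2 * k - 2 * l + 1) (Mac F N t Γ (n + 2 * l) f))
      = ∑ i, ∑ j, macQCommCoeff t q Γ n k i j * Γ i (Γ j f) := by
  simp only [Mac_Mac_eq_sum, macQCommCoeff, smul_sum, ← sum_sub_distrib, sum_mul, sub_mul,
    smul_mul_assoc]
  rw [sum_comm]
  exact sum_congr rfl fun i _ => sum_comm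

theorem IsQShift.macQCommCoeff_self (hΓ : IsQShift q Γ) (hq : q ≠ 0) (n : ℤ) (k : ℕ)
    (i : Fin N) : macQCommCoeff t q Γ n k i i = 0 := by
  have hterm : ∀ l : ℕ, macCompCoeff t Γ (n + 2 * l) (n + 2 * k - 2 * l + 1) i i
      - q • macCompCoeff t Γ (n + 2 * k - 2 * l + 1) (n + 2 * l) i i
      = (q ^ (n + 2 * (k : ℤ) - 2 * l + 1) - q ^ (n + 2 * (l : ℤ) + 1)) •
          (Xv F N i ^ (2 * n + 2 * k + 1) * (macCoeff t 0 i * Γ i (macCoeff t 0 i))) := by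
    intro l
    rw [hΓ.macCompCoeff_self, hΓ.macCompCoeff_self, smul_smul, ← zpow_one_add₀ hq, sub_smul]
    ring_nf
  rw [macQCommCoeff, sum_congr rfl fun l _ => hterm l, ← sum_smul,
    sum_range_zpow_reflect_sub_eq_zero, zero_smul]

theorem IsQShift.macQCommCoeff_add_swap (hΓ : IsQShift q Γ) (n : ℤ) (k : ℕ) {i j : Fin N}
    (hij : i ≠ j) :
    macQCommCoeff t q Γ n k i j + macQCommCoeff t q Γ n k j i
      = ((1 - q) * t) •
        (((Xv F N i ^ (n + 2 * k + 1 + 1) * Xv F N j ^ n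
            - Xv F N j ^ (n + 2 * k + 1 + 1) * Xv F N i ^ n) / (Xv F N i - Xv F N j)) *
          ∏ l ∈ (univ.erase i).erase j,
            ((t • Xv F N i - Xv F N l) * (t • Xv F N j - Xv F N l)) /
              ((Xv F N i - Xv F N l) * (Xv F N j - Xv F N l))) := by
  have hci := fun m => macCoeff_eq_of_ne t m hij
  have hcj := fun m => macCoeff_eq_of_ne t m hij.symm
  have hgj := fun m => hΓ.apply_macCoeff_of_ne (t := t) m hij
  have hgi := fun m => hΓ.apply_macCoeff_of_ne (t := t) m hij.symm
  rw [erase_right_comm] at hcj hgj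
  simp_rw [← div_mul_div_comm]
  rw [prod_mul_distrib, macQCommCoeff, macQCommCoeff, ← sum_add_distrib]
  simp only [macCompCoeff, hgi, hgj]
  simp only [hci, hcj, Algebra.smul_def, map_mul, map_sub, map_one]
  rw [← mul_assoc, ← sum_qComm_two_point (Xv_ne_zero i) (Xv_ne_zero j) (Xv_sub_Xv_ne_zero hij)
    (Xv_sub_algebraMap_mul_Xv_ne_zero hij.symm q) (Xv_sub_algebraMap_mul_Xv_ne_zero hij q),
    sum_mul]
  exact sum_congr rfl fun l _ => by ring

end Macdonald

theorem statement10_general (F : Type) [Field F] (q t : F) (hq : q ≠ 0)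
    (N : ℕ)
    (Γ : Fin N → (RatF F N ≃ₐ[F] RatF F N))
    (hΓ : ∀ i j : Fin N, Γ i (Xv F N j) = if j = i then q • Xv F N j else Xv F N j)
    (n : ℤ) (k : ℕ) (f : RatF F N) :
    ((1 - q) * t) • MacPair F N t Γ (n + 2 * k + 1) n f
      = ∑ l ∈ Finset.range (k + 1),
          (Mac F N t Γ (n + 2 * l) (Mac F N t Γ (n + 2 * k - 2 * l + 1) f)
            - q • Mac F N t Γ (n + 2 * k - 2 * l + 1) (Mac F N t Γ (n + 2 * l) f)) := by
  have hshift : IsQShift q Γ := hΓ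
  rw [sum_qComm_Mac_eq_sum, sum_sum_eq_sum_sum_lt_add_swap _ fun i => by
    rw [hshift.macQCommCoeff_self hq, zero_mul], MacPair, smul_sum]
  refine sum_congr rfl fun i _ => ?_
  rw [smul_sum]
  refine sum_congr rfl fun j hj => ?_
  rw [hshift.comm j i, ← add_mul, hshift.macQCommCoeff_add_swap n k (mem_filter.mp hj).2.ne,
    smul_mul_assoc]

/-- `(1−q)·t·𝓜_{n+2k+1,n} = Σ_{ℓ=0}^k [𝓜_{n+2ℓ}, 𝓜_{n+2k−2ℓ+1}]_q`,
where `[X,Y]_q = X∘Y − q·Y∘X`. -/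
theorem statement10 (F : Type) [Field F] [CharZero F] (q t : F) (hq : q ≠ 0) (ht : t ≠ 0)
    (N : ℕ) (hN : 1 ≤ N)
    (Γ : Fin N → (RatF F N ≃ₐ[F] RatF F N))
    (hΓ : ∀ i j : Fin N, Γ i (Xv F N j) = if j = i then q • Xv F N j else Xv F N j)
    (n : ℤ) (k : ℕ) (f : RatF F N) :
    ((1 - q) * t) • MacPair F N t Γ (n + 2 * k + 1) n f
      = ∑ l ∈ Finset.range (k + 1),
          (Mac F N t Γ (n + 2 * l) (Mac F N t Γ (n + 2 * k - 2 * l + 1) f)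
            - q • Mac F N t Γ (n + 2 * k - 2 * l + 1) (Mac F N t Γ (n + 2 * l) f)) :=
  statement10_general F q t hq N Γ hΓ n k f

end
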